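/- arXiv:1811.08137 — 2 statements merged into one kernel-verified Lean document; each statement's English description precedes it below -/
import Mathlib

section
/- Besov bound for the convex part: for every ε > 0 and every L_1-bounded ℝ^ℓ-valued martingale F adapted to (ℱ_n), one has Σ_{n=0}^∞ ‖ Σ_{ω ∈ 𝒜_n, ω ε-convex for F} f_{n+1}·1_ω ‖_{L_1(P)} ≤ ((ε+2)/ε)·‖F‖_{L_1}, where 𝒜_n denotes the set of atoms of ℱ_n and the L_1 norm is that of the pointwise Euclidean norm. -/
open MeasureTheory ENNReal NNReal

noncomputable section

namespace MartingaleModel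

/-- The cylinder in `ℕ → Fin m` determined by a word `w` of length `n`. -/
def cyl (m n : ℕ) (w : Fin n → Fin m) : Set (ℕ → Fin m) :=
  {x | ∀ i : Fin n, x (i : ℕ) = w i}

/-- `F` is adapted: `F n` depends only on the first `n` coordinates. -/
def AdaptedFun (m : ℕ) {E : Type*} (F : ℕ → (ℕ → Fin m) → E) : Prop :=
  ∀ n (x y : ℕ → Fin m), (∀ i < n, x i = y i) → F n x = F n y

/-- `F` is a martingale for the uniform `m`-adic filtration:
adapted, and each value is the average of the values on the children. -/
def IsMartingaleFun (m : ℕ) {E : Type*} [AddCommGroup E] [Module ℝ E]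
    (F : ℕ → (ℕ → Fin m) → E) : Prop :=
  AdaptedFun m F ∧
    ∀ n (x : ℕ → Fin m), (m : ℝ) • F n x = ∑ j : Fin m, F (n + 1) (Function.update x n j)

/-- Partial sums of the Riesz potential `I_α` applied to the martingale `F`,
`(I_α F)_N = ∑_{n=1}^N m^{-α n} f_n` where `f_n = F_n - F_{n-1}`. -/
def rieszSum (m : ℕ) {E : Type*} [AddCommGroup E] [Module ℝ E] (α : ℝ)
    (F : ℕ → (ℕ → Fin m) → E) (N : ℕ) (x : ℕ → Fin m) : E :=
  ∑ n ∈ Finset.Icc 1 N, ((m : ℝ) ^ (-(α * n)) : ℝ) • (F n x - F (n - 1) x)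

end MartingaleModel

open MartingaleModel

namespace MartingaleModel

/-- The atom `ω_w` of `ℱ_n` is `ε`-convex for the martingale `F` if
`E[(‖F_{n+1}‖ - ‖F_n‖)·1_ω] ≥ ε·E[‖F_n‖·1_ω]`; otherwise it is `ε`-flat. -/
def IsConvexAtom {m l : ℕ} (P : Measure (ℕ → Fin m)) (ε : ℝ)
    (F : ℕ → (ℕ → Fin m) → EuclideanSpace ℝ (Fin l)) (n : ℕ) (w : Fin n → Fin m) : Prop :=
  ε * ∫ x in cyl m n w, ‖F n x‖ ∂P ≤ ∫ x in cyl m n w, (‖F (n + 1) x‖ - ‖F n x‖) ∂P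

end MartingaleModel

/-! On an `ε`-convex atom `ω` of `ℱ_n`, the triangle inequality and the convexity condition give
`E‖f_{n+1} 1_ω‖ ≤ E[(‖F_{n+1}‖ + ‖F_n‖) 1_ω] ≤ (1 + 2/ε) E[(‖F_{n+1}‖ - ‖F_n‖) 1_ω]`, and on every
atom the last expectation is nonnegative because `‖F_n‖` is a submartingale. Summing over the atoms
of `ℱ_n` and over `n < N`, the right-hand side telescopes to at most `(1 + 2/ε) E‖F_N‖`. -/

namespace MartingaleModel

open Function Set

lemma eLpNorm_one_eq_ofReal_integral_norm {α E : Type*} [MeasurableSpace α]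
    [NormedAddCommGroup E] {μ : Measure α} {f : α → E} (hf : Integrable f μ) :
    eLpNorm f 1 μ = ENNReal.ofReal (∫ x, ‖f x‖ ∂μ) := by
  rw [eLpNorm_one_eq_lintegral_enorm, ofReal_integral_norm_eq_lintegral_enorm hf]

variable {m : ℕ}

lemma measurableSet_cyl (n : ℕ) (w : Fin n → Fin m) : MeasurableSet (cyl m n w) := by
  have h : cyl m n w = ⋂ i : Fin n, (fun x : ℕ → Fin m => x i) ⁻¹' {w i} := by
    ext x; simp [cyl]
  rw [h]
  exact .iInter fun i => measurable_pi_apply _ (measurableSet_singleton _)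

lemma pairwise_disjoint_cyl (n : ℕ) : Pairwise (Disjoint on cyl m n) :=
  fun _ _ hne => disjoint_left.2 fun _ hx hx' => hne (funext fun i => (hx i).symm.trans (hx' i))

lemma iUnion_cyl (n : ℕ) : ⋃ w : Fin n → Fin m, cyl m n w = univ :=
  eq_univ_of_forall fun x => mem_iUnion.2 ⟨fun i => x i, fun _ => rfl⟩

lemma nonempty_cyl [NeZero m] {n : ℕ} (w : Fin n → Fin m) : (cyl m n w).Nonempty :=
  ⟨fun i => if h : i < n then w ⟨i, h⟩ else 0, fun i => dif_pos i.isLt⟩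

lemma mem_cyl_snoc {n : ℕ} {w : Fin n → Fin m} {j : Fin m} {x : ℕ → Fin m} :
    x ∈ cyl m (n + 1) (Fin.snoc w j) ↔ x ∈ cyl m n w ∧ x n = j := by
  refine ⟨fun h => ⟨fun i => by simpa using h i.castSucc, by simpa using h (Fin.last n)⟩,
    fun ⟨h, hn⟩ i => Fin.lastCases (by simpa using hn) (fun i => by simpa using h i) i⟩

lemma cyl_eq_iUnion_snoc {n : ℕ} (w : Fin n → Fin m) :
    cyl m n w = ⋃ j : Fin m, cyl m (n + 1) (Fin.snoc w j) := by
  ext x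
  simp only [mem_iUnion, mem_cyl_snoc]
  exact ⟨fun h => ⟨x n, h, rfl⟩, fun ⟨_, h, _⟩ => h⟩

lemma update_mem_cyl_snoc {n : ℕ} {w : Fin n → Fin m} {x : ℕ → Fin m} (hx : x ∈ cyl m n w)
    (j : Fin m) : update x n j ∈ cyl m (n + 1) (Fin.snoc w j) :=
  mem_cyl_snoc.2 ⟨fun i => by simpa [update_of_ne i.isLt.ne] using hx i, update_self ..⟩

lemma DependsOn.eq_of_mem_cyl {β : Type*} {h : (ℕ → Fin m) → β} {n : ℕ}
    (hh : DependsOn h (Iio n)) {w : Fin n → Fin m} {x y : ℕ → Fin m}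
    (hx : x ∈ cyl m n w) (hy : y ∈ cyl m n w) : h x = h y :=
  hh fun i hi => (hx ⟨i, hi⟩).trans (hy ⟨i, hi⟩).symm

lemma DependsOn.integrable {E : Type*} [NormedAddCommGroup E] {P : Measure (ℕ → Fin m)}
    [IsFiniteMeasure P] {h : (ℕ → Fin m) → E} {n : ℕ} (hh : DependsOn h (Iio n)) :
    Integrable h P := by
  obtain ⟨g, rfl⟩ := dependsOn_iff_exists_comp.1 hh
  exact Integrable.of_finite.comp_measurable (measurable_pi_lambda _ fun i => measurable_pi_apply _)

lemma AdaptedFun.dependsOn {E : Type*} {F : ℕ → (ℕ → Fin m) → E} (hF : AdaptedFun m F) (n : ℕ) :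
    DependsOn (F n) (Iio n) :=
  fun x y h => hF n x y h

def HasUniformCylinders (P : Measure (ℕ → Fin m)) : Prop :=
  ∀ (n : ℕ) (w : Fin n → Fin m), P (cyl m n w) = ((m : ℝ≥0∞))⁻¹ ^ n

variable {P : Measure (ℕ → Fin m)} {E : Type*} [NormedAddCommGroup E] [NormedSpace ℝ E]

lemma setIntegral_cyl_eq_smul [CompleteSpace E] (hP : HasUniformCylinders P)
    {h : (ℕ → Fin m) → E} {n : ℕ} (hh : DependsOn h (Iio n)) {w : Fin n → Fin m}
    {x : ℕ → Fin m} (hx : x ∈ cyl m n w) :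
    ∫ y in cyl m n w, h y ∂P = ((m : ℝ)⁻¹ ^ n) • h x := by
  rw [setIntegral_congr_fun (measurableSet_cyl n w) fun y hy => hh.eq_of_mem_cyl hy hx,
    setIntegral_const, measureReal_def, hP n w]
  simp

lemma setIntegral_cyl_eq_sum_snoc {h : (ℕ → Fin m) → E} (hh : Integrable h P) {n : ℕ}
    (w : Fin n → Fin m) :
    ∫ x in cyl m n w, h x ∂P = ∑ j : Fin m, ∫ x in cyl m (n + 1) (Fin.snoc w j), h x ∂P := by
  have hdisj : Pairwise (Disjoint on fun j : Fin m => cyl m (n + 1) (Fin.snoc w j)) :=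
    fun j j' hne => pairwise_disjoint_cyl _ fun heq =>
      hne (by simpa using congrFun heq (Fin.last n))
  rw [cyl_eq_iUnion_snoc w, integral_iUnion (fun j => measurableSet_cyl _ _) hdisj hh.integrableOn,
    tsum_fintype]

lemma integral_eq_sum_cyl {h : (ℕ → Fin m) → E} (hh : Integrable h P) (n : ℕ) :
    ∫ x, h x ∂P = ∑ w : Fin n → Fin m, ∫ x in cyl m n w, h x ∂P := by
  rw [← setIntegral_univ, ← iUnion_cyl n, integral_iUnion (measurableSet_cyl n)
    (pairwise_disjoint_cyl n) hh.integrableOn, tsum_fintype]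

lemma IsMartingaleFun.setIntegral_succ [NeZero m] [CompleteSpace E] [IsFiniteMeasure P]
    (hP : HasUniformCylinders P) {F : ℕ → (ℕ → Fin m) → E} (hF : IsMartingaleFun m F) {n : ℕ}
    (w : Fin n → Fin m) : ∫ x in cyl m n w, F (n + 1) x ∂P = ∫ x in cyl m n w, F n x ∂P := by
  obtain ⟨x, hx⟩ := nonempty_cyl w
  have hm : (m : ℝ) ≠ 0 := Nat.cast_ne_zero.2 (NeZero.ne m)
  calc ∫ x in cyl m n w, F (n + 1) x ∂P
      = ∑ j : Fin m, ((m : ℝ)⁻¹ ^ (n + 1)) • F (n + 1) (update x n j) := by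
        rw [setIntegral_cyl_eq_sum_snoc ((hF.1.dependsOn _).integrable) w]
        exact Finset.sum_congr rfl fun j _ =>
          setIntegral_cyl_eq_smul hP (hF.1.dependsOn _) (update_mem_cyl_snoc hx j)
    _ = ((m : ℝ)⁻¹ ^ n) • F n x := by
        rw [← Finset.smul_sum, ← hF.2 n x, smul_smul, pow_succ, mul_assoc, inv_mul_cancel₀ hm,
          mul_one]
    _ = ∫ x in cyl m n w, F n x ∂P := (setIntegral_cyl_eq_smul hP (hF.1.dependsOn n) hx).symm

lemma IsMartingaleFun.setIntegral_norm_le_succ [NeZero m] [CompleteSpace E] [IsFiniteMeasure P]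
    (hP : HasUniformCylinders P) {F : ℕ → (ℕ → Fin m) → E} (hF : IsMartingaleFun m F) {n : ℕ}
    (w : Fin n → Fin m) : ∫ x in cyl m n w, ‖F n x‖ ∂P ≤ ∫ x in cyl m n w, ‖F (n + 1) x‖ ∂P := by
  obtain ⟨x, hx⟩ := nonempty_cyl w
  have hFn := hF.1.dependsOn n
  calc ∫ x in cyl m n w, ‖F n x‖ ∂P = ‖∫ x in cyl m n w, F n x ∂P‖ := by
        rw [setIntegral_cyl_eq_smul hP (fun _ _ h => congrArg norm (hFn h)) hx,
          setIntegral_cyl_eq_smul hP hFn hx, norm_smul, smul_eq_mul,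
          Real.norm_of_nonneg (by positivity)]
    _ = ‖∫ x in cyl m n w, F (n + 1) x ∂P‖ := by rw [hF.setIntegral_succ hP w]
    _ ≤ ∫ x in cyl m n w, ‖F (n + 1) x‖ ∂P := norm_integral_le_integral_norm _

lemma add_le_div_mul_sub_of_mul_le_sub {ε a b : ℝ} (hε : 0 < ε) (h : ε * b ≤ a - b) :
    a + b ≤ (ε + 2) / ε * (a - b) := by
  rw [div_mul_eq_mul_div, le_div_iff₀ hε]
  linarith

variable {l : ℕ} {ε : ℝ} {F : ℕ → (ℕ → Fin m) → EuclideanSpace ℝ (Fin l)}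

open Classical in
/-- The part `∑_{ω ∈ 𝒜_n ε-convex} f_{n+1} 1_ω` of the martingale difference `f_{n+1}`. -/
def convexPart (P : Measure (ℕ → Fin m)) (ε : ℝ)
    (F : ℕ → (ℕ → Fin m) → EuclideanSpace ℝ (Fin l)) (n : ℕ) (x : ℕ → Fin m) :
    EuclideanSpace ℝ (Fin l) :=
  if IsConvexAtom P ε F n (fun i : Fin n => x i) then F (n + 1) x - F n x else 0

lemma AdaptedFun.dependsOn_convexPart (hF : AdaptedFun m F) (n : ℕ) :
    DependsOn (convexPart P ε F n) (Iio (n + 1)) := by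
  intro x y h
  have hw : (fun i : Fin n => x i) = fun i : Fin n => y i :=
    funext fun i => h i (Nat.lt_succ_of_lt i.isLt)
  rw [convexPart, convexPart, hw, hF.dependsOn (n + 1) h,
    hF.dependsOn n fun i hi => h i (Nat.lt_succ_of_lt hi)]

lemma IsMartingaleFun.setIntegral_norm_convexPart_le [NeZero m] [IsFiniteMeasure P]
    (hP : HasUniformCylinders P) (hε : 0 < ε) (hF : IsMartingaleFun m F) {n : ℕ}
    (w : Fin n → Fin m) :
    ∫ x in cyl m n w, ‖convexPart P ε F n x‖ ∂P ≤
      (ε + 2) / ε * (∫ x in cyl m n w, ‖F (n + 1) x‖ ∂P - ∫ x in cyl m n w, ‖F n x‖ ∂P) := by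
  have hw : ∀ x ∈ cyl m n w, (fun i : Fin n => x i) = w := fun x hx => funext hx
  have hint : ∀ k, IntegrableOn (fun x => ‖F k x‖) (cyl m n w) P :=
    fun k => (hF.1.dependsOn k).integrable.norm.integrableOn
  by_cases hconv : IsConvexAtom P ε F n w
  · have htri : ∫ x in cyl m n w, ‖convexPart P ε F n x‖ ∂P ≤
        ∫ x in cyl m n w, ‖F (n + 1) x‖ ∂P + ∫ x in cyl m n w, ‖F n x‖ ∂P := by
      rw [← integral_add (hint _) (hint _)]
      refine setIntegral_mono_on (hF.1.dependsOn_convexPart n).integrable.norm.integrableOn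
        ((hint _).add (hint _)) (measurableSet_cyl n w) fun x hx => ?_
      rw [convexPart, hw x hx, if_pos hconv]
      exact norm_sub_le _ _
    rw [IsConvexAtom, integral_sub (hint _) (hint _)] at hconv
    exact htri.trans (add_le_div_mul_sub_of_mul_le_sub hε hconv)
  · have hzero : ∫ x in cyl m n w, ‖convexPart P ε F n x‖ ∂P = 0 :=
      setIntegral_eq_zero_of_forall_eq_zero fun x hx => by
        rw [convexPart, hw x hx, if_neg hconv, norm_zero]
    rw [hzero]
    exact mul_nonneg (by positivity) (sub_nonneg.2 (hF.setIntegral_norm_le_succ hP w))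

lemma IsMartingaleFun.integral_norm_convexPart_le [NeZero m] [IsFiniteMeasure P]
    (hP : HasUniformCylinders P) (hε : 0 < ε) (hF : IsMartingaleFun m F) (n : ℕ) :
    ∫ x, ‖convexPart P ε F n x‖ ∂P ≤
      (ε + 2) / ε * (∫ x, ‖F (n + 1) x‖ ∂P - ∫ x, ‖F n x‖ ∂P) := by
  have hint : ∀ k, Integrable (fun x => ‖F k x‖) P := fun k => (hF.1.dependsOn k).integrable.norm
  rw [integral_eq_sum_cyl (hF.1.dependsOn_convexPart n).integrable.norm n,
    integral_eq_sum_cyl (hint _) n, integral_eq_sum_cyl (hint n) n, ← Finset.sum_sub_distrib,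
    Finset.mul_sum]
  exact Finset.sum_le_sum fun w _ => hF.setIntegral_norm_convexPart_le hP hε w

lemma IsMartingaleFun.sum_integral_norm_convexPart_le [NeZero m] [IsFiniteMeasure P]
    (hP : HasUniformCylinders P) (hε : 0 < ε) (hF : IsMartingaleFun m F) (N : ℕ) :
    ∑ n ∈ Finset.range N, ∫ x, ‖convexPart P ε F n x‖ ∂P ≤ (ε + 2) / ε * ∫ x, ‖F N x‖ ∂P := by
  calc ∑ n ∈ Finset.range N, ∫ x, ‖convexPart P ε F n x‖ ∂P
      ≤ ∑ n ∈ Finset.range N, (ε + 2) / ε * (∫ x, ‖F (n + 1) x‖ ∂P - ∫ x, ‖F n x‖ ∂P) :=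
        Finset.sum_le_sum fun n _ => hF.integral_norm_convexPart_le hP hε n
    _ = (ε + 2) / ε * (∫ x, ‖F N x‖ ∂P - ∫ x, ‖F 0 x‖ ∂P) := by
        rw [← Finset.mul_sum, Finset.sum_range_sub fun n => ∫ x, ‖F n x‖ ∂P]
    _ ≤ (ε + 2) / ε * ∫ x, ‖F N x‖ ∂P := by
        gcongr
        exact sub_le_self _ (integral_nonneg fun _ => norm_nonneg _)

lemma IsMartingaleFun.sum_eLpNorm_convexPart_le [NeZero m] [IsFiniteMeasure P]
    (hP : HasUniformCylinders P) (hε : 0 < ε) (hF : IsMartingaleFun m F) (N : ℕ) :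
    ∑ n ∈ Finset.range N, eLpNorm (convexPart P ε F n) 1 P ≤
      ENNReal.ofReal ((ε + 2) / ε) * eLpNorm (F N) 1 P := by
  rw [Finset.sum_congr rfl fun n _ => eLpNorm_one_eq_ofReal_integral_norm
      (hF.1.dependsOn_convexPart n).integrable,
    ← ENNReal.ofReal_sum_of_nonneg fun n _ => integral_nonneg fun _ => norm_nonneg _,
    eLpNorm_one_eq_ofReal_integral_norm (hF.1.dependsOn N).integrable,
    ← ENNReal.ofReal_mul (by positivity)]
  exact ENNReal.ofReal_le_ofReal (hF.sum_integral_norm_convexPart_le hP hε N)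

end MartingaleModel

open Classical in
theorem convex_part_besov_bound_general (m l : ℕ) (hm : 3 ≤ m)
    (P : Measure (ℕ → Fin m)) (hP : IsProbabilityMeasure P)
    (hPcyl : ∀ (n : ℕ) (w : Fin n → Fin m), P (cyl m n w) = ((m : ℝ≥0∞))⁻¹ ^ n)
    (ε : ℝ) (hε : 0 < ε)
    (F : ℕ → (ℕ → Fin m) → EuclideanSpace ℝ (Fin l)) (hF : IsMartingaleFun m F) :
    ∑' n : ℕ, eLpNorm
        (fun x => if IsConvexAtom P ε F n (fun i : Fin n => x (i : ℕ))
          then F (n + 1) x - F n x else 0) 1 P ≤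
      ENNReal.ofReal ((ε + 2) / ε) * ⨆ n, eLpNorm (F n) 1 P := by
  have : NeZero m := ⟨by omega⟩
  rw [ENNReal.tsum_eq_iSup_nat]
  refine iSup_le fun N => ?_
  calc ∑ n ∈ Finset.range N, eLpNorm (convexPart P ε F n) 1 P
      ≤ ENNReal.ofReal ((ε + 2) / ε) * eLpNorm (F N) 1 P :=
        hF.sum_eLpNorm_convexPart_le hPcyl hε N
    _ ≤ ENNReal.ofReal ((ε + 2) / ε) * ⨆ n, eLpNorm (F n) 1 P := by
        gcongr
        exact le_iSup (fun n => eLpNorm (F n) 1 P) N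

open Classical in
/-- **Besov bound for the convex part.** For every `ε > 0` and every `L_1`-bounded
martingale `F`, the sum over `n` of the `L_1` norms of the parts of the martingale
differences supported on `ε`-convex atoms is bounded by `((ε+2)/ε)·‖F‖_{L_1}`. -/
theorem convex_part_besov_bound (m l : ℕ) (hm : 3 ≤ m) (hl : 1 ≤ l)
    (P : Measure (ℕ → Fin m)) (hP : IsProbabilityMeasure P)
    (hPcyl : ∀ (n : ℕ) (w : Fin n → Fin m), P (cyl m n w) = ((m : ℝ≥0∞))⁻¹ ^ n)
    (ε : ℝ) (hε : 0 < ε)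
    (F : ℕ → (ℕ → Fin m) → EuclideanSpace ℝ (Fin l)) (hF : IsMartingaleFun m F)
    (hL1 : (⨆ n, eLpNorm (F n) 1 P) < ⊤) :
    ∑' n : ℕ, eLpNorm
        (fun x => if IsConvexAtom P ε F n (fun i : Fin n => x (i : ℕ))
          then F (n + 1) x - F n x else 0) 1 P ≤
      ENNReal.ofReal ((ε + 2) / ε) * ⨆ n, eLpNorm (F n) 1 P :=
  convex_part_besov_bound_general m l hm P hP hPcyl ε hε F hF
end
end

section
/- Sharpness of the trace theorem when κ is linear: suppose κ(θ) = (1−θ)·κ(0) for all θ ∈ [0,1]. Then for every α with 0 < α ≤ κ(0)/log m (note κ(0) = −κ'(1) in this case) there exist a finite positive Borel measure ν on 𝕋 satisfying the (α,1)-Frostman condition with some constant C_ν, and a martingale F ∈ 𝔚 with ‖F‖_{L_1} < ∞, such that sup_{N ≥ 1} ∫_𝕋 ‖Σ_{n=1}^N m^{−α·n}·f_n‖ dν = +∞; in particular I_α does not map 𝔚 boundedly into L_1(ν). -/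
open MeasureTheory ENNReal NNReal

noncomputable section

open MartingaleModel

namespace MartingaleModel

/-- The Lorentz `L_{p,1}` quasinorm `‖g‖_{L_{p,1}} = ∫₀^∞ μ({x : ‖g(x)‖ > t})^{1/p} dt`. -/
def lorentzNorm {X : Type*} [MeasurableSpace X] (μ : Measure X) (p : ℝ)
    {E : Type*} [NormedAddCommGroup E] (g : X → E) : ℝ≥0∞ :=
  ∫⁻ t in Set.Ioi (0 : ℝ), (μ {x | t < ‖g x‖}) ^ (1 / p)

/-- The tuple in `V^ℓ` of values of the martingale difference `f_{n+1}` on the `m`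
children of the atom of `ℱ_n` containing `x`. -/
def diffTuple (m : ℕ) {E : Type*} [AddCommGroup E]
    (F : ℕ → (ℕ → Fin m) → E) (n : ℕ) (x : ℕ → Fin m) : Fin m → E :=
  fun j => F (n + 1) (Function.update x n j) - F n x

/-- Membership of a martingale in the Sobolev-type space `𝔚`:
every difference tuple lies in `W`. -/
def MemW (m l : ℕ) (W : Submodule ℝ (Fin m → EuclideanSpace ℝ (Fin l)))
    (F : ℕ → (ℕ → Fin m) → EuclideanSpace ℝ (Fin l)) : Prop :=
  ∀ (n : ℕ) (x : ℕ → Fin m), diffTuple m F n x ∈ W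

/-- The second structural condition: `W` contains no nonzero vector `v ⊗ a` in which
`v` has `m - 1` equal coordinates. -/
def SecondStructural (m l : ℕ) (W : Submodule ℝ (Fin m → EuclideanSpace ℝ (Fin l))) : Prop :=
  ∀ (v : Fin m → ℝ) (a : EuclideanSpace ℝ (Fin l)),
    (∑ j, v j = 0) → (∃ j₀ c, ∀ j, j ≠ j₀ → v j = c) →
    (fun j => v j • a) ∈ W → (fun j => v j • a) = 0

end MartingaleModel

namespace MartingaleModel

/-- The admissible set of vectors `v ∈ V` appearing in the definition of `κ`:
`∑ v_j = 0`, `v_j ≥ -1` for all `j`, and `v ⊗ a ∈ W` for some `a ≠ 0`. -/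
def kappaSet (m l : ℕ) (W : Submodule ℝ (Fin m → EuclideanSpace ℝ (Fin l))) :
    Set (Fin m → ℝ) :=
  {v | (∑ j, v j = 0) ∧ (∀ j, -1 ≤ v j) ∧
    ∃ a : EuclideanSpace ℝ (Fin l), a ≠ 0 ∧ (fun j => v j • a) ∈ W}

/-- The function `κ`: for `θ ∈ (0,1]`,
`κ(θ) = sup { θ·log((1/m)·∑_j |1+v_j|^{1/θ}) }` over the admissible set, and
`κ(0) = sup { log (max_j (1+v_j)) }` over the same set. -/
def kappa (m l : ℕ) (W : Submodule ℝ (Fin m → EuclideanSpace ℝ (Fin l))) (θ : ℝ) : ℝ :=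
  if θ = 0 then
    sSup ((fun v : Fin m → ℝ => Real.log (⨆ j : Fin m, (1 + v j))) '' kappaSet m l W)
  else
    sSup ((fun v : Fin m → ℝ =>
      θ * Real.log ((1 / m) * ∑ j : Fin m, |1 + v j| ^ (1 / θ))) '' kappaSet m l W)

end MartingaleModel

/-!
Linearity of `κ` at `θ = 1/2` means that `(1/m) ∑ (1 + v_j)²` attains `M := e^{κ(0)}` at some
admissible `v` (the admissible set is compact), while `1 + v_j ≤ M` for every admissible `v` by
definition of `κ(0)`. For `a ≠ 0` with `v ⊗ a ∈ W`, the cascade `F_n = ∏_{i<n} (1 + v_{x_i}) • a`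
is a nonnegative multiple of `a`, hence a martingale in `𝔚` of constant `L₁` norm `‖a‖`.
Take for `ν` the product measure whose one-step law `q` has atoms at most `m^{α-1}` (which is the
Frostman condition) and under which `1 + v` has mean `m^α`; this is possible exactly because
`m^α ≤ M`. Then `E_ν F_n = m^{αn} a`, so `E_ν (I_α F)_N = N (1 - m^{-α}) a` grows linearly in `N`.
-/

namespace MartingaleModel

section Cylinders

variable {α : Type*} [MeasurableSpace α]

def take (n : ℕ) (x : ℕ → α) : Fin n → α := fun i => x i

lemma measurable_take (n : ℕ) : Measurable (take n : (ℕ → α) → Fin n → α) :=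
  measurable_pi_lambda _ fun i => measurable_pi_apply (i : ℕ)

lemma map_take_infinitePi (p : Measure α) [IsProbabilityMeasure p] (n : ℕ) :
    (Measure.infinitePi fun _ : ℕ => p).map (take n) = Measure.pi fun _ : Fin n => p := by
  have hindep := (ProbabilityTheory.iIndepFun_infinitePi (P := fun _ : ℕ => p)
    (X := fun _ x => x) fun _ => measurable_id).precomp (Fin.val_injective (n := n))
  refine (hindep.map_fun_eq_pi_map fun i => (measurable_pi_apply _).aemeasurable).trans ?_
  simp only [Measure.infinitePi_map_eval]

lemma take_preimage_singleton {m n : ℕ} (w : Fin n → Fin m) :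
    take n ⁻¹' {w} = cyl m n w := by
  ext x
  simp [take, cyl, funext_iff]

lemma map_take_apply_singleton {m n : ℕ} (μ : Measure (ℕ → Fin m)) (w : Fin n → Fin m) :
    μ.map (take n) {w} = μ (cyl m n w) := by
  rw [Measure.map_apply (measurable_take n) (measurableSet_singleton w),
    take_preimage_singleton]

lemma map_take_eq_pi_of_cyl {m : ℕ} {μ : Measure (ℕ → Fin m)} {p : Measure (Fin m)}
    [SigmaFinite p] (h : ∀ n (w : Fin n → Fin m), μ (cyl m n w) = ∏ i, p {w i}) (n : ℕ) :
    μ.map (take n) = Measure.pi fun _ : Fin n => p :=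
  Measure.ext_iff_singleton.2 fun w => by
    rw [map_take_apply_singleton, h, Measure.pi_singleton]

lemma infinitePi_cyl {m : ℕ} (p : Measure (Fin m)) [IsProbabilityMeasure p] (n : ℕ)
    (w : Fin n → Fin m) :
    (Measure.infinitePi fun _ : ℕ => p) (cyl m n w) = ∏ i, p {w i} := by
  rw [← map_take_apply_singleton, map_take_infinitePi, Measure.pi_singleton]

lemma infinitePi_cyl_le {m : ℕ} {p : Measure (Fin m)} [IsProbabilityMeasure p] {r : ℝ}
    (hr0 : 0 ≤ r) (hr : ∀ j, p {j} ≤ ENNReal.ofReal r) (n : ℕ) (w : Fin n → Fin m) :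
    (Measure.infinitePi fun _ : ℕ => p) (cyl m n w) ≤ ENNReal.ofReal (r ^ n) := by
  rw [infinitePi_cyl, ENNReal.ofReal_pow hr0]
  calc ∏ i, p {w i} ≤ ∏ _i : Fin n, ENNReal.ofReal r := Finset.prod_le_prod' fun i _ => hr _
    _ = _ := by simp

variable {m n : ℕ} {E : Type*} [NormedAddCommGroup E]
  {μ : Measure (ℕ → Fin m)} {p : Measure (Fin m)} [IsProbabilityMeasure p]

lemma integrable_comp_take (hμ : μ.map (take n) = Measure.pi fun _ => p)
    (g : (Fin n → Fin m) → E) : Integrable (fun x => g (take n x)) μ := by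
  have hg : Integrable g (μ.map (take n)) := hμ ▸ Integrable.of_finite
  exact hg.comp_measurable (measurable_take n)

lemma integral_comp_take [NormedSpace ℝ E] (hμ : μ.map (take n) = Measure.pi fun _ => p)
    (g : (Fin n → Fin m) → E) :
    ∫ x, g (take n x) ∂μ = ∫ w, g w ∂(Measure.pi fun _ => p) := by
  have hg : AEStronglyMeasurable g (μ.map (take n)) :=
    (hμ ▸ Integrable.of_finite : Integrable g _).aestronglyMeasurable
  rw [← integral_map (measurable_take n).aemeasurable hg, hμ]

end Cylinders

section Cascade

variable {m : ℕ} {E : Type*} [NormedAddCommGroup E] [NormedSpace ℝ E] (v : Fin m → ℝ) (a : E)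

def cascade (n : ℕ) (x : ℕ → Fin m) : E := (∏ i : Fin n, (1 + v (x i))) • a

lemma cascade_succ (n : ℕ) (x : ℕ → Fin m) :
    cascade v a (n + 1) x = (1 + v (x n)) • cascade v a n x := by
  simp only [cascade, Fin.prod_univ_castSucc, Fin.val_castSucc, Fin.val_last, smul_smul,
    mul_comm]

lemma adaptedFun_cascade : AdaptedFun m (cascade v a) := fun n x y h => by
  simp only [cascade]
  congr 1
  exact Finset.prod_congr rfl fun i _ => by rw [h i i.isLt]

lemma cascade_update (n : ℕ) (x : ℕ → Fin m) (j : Fin m) :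
    cascade v a n (Function.update x n j) = cascade v a n x :=
  adaptedFun_cascade v a n _ _ fun _ hi => Function.update_of_ne hi.ne _ _

lemma isMartingaleFun_cascade (hv : ∑ j, v j = 0) : IsMartingaleFun m (cascade v a) := by
  refine ⟨adaptedFun_cascade v a, fun n x => ?_⟩
  simp only [cascade_succ, Function.update_self, cascade_update, ← Finset.sum_smul,
    Finset.sum_add_distrib, hv]
  simp

lemma diffTuple_cascade (n : ℕ) (x : ℕ → Fin m) :
    diffTuple m (cascade v a) n x = (∏ i : Fin n, (1 + v (x i))) • fun j => v j • a := by
  funext j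
  simp only [diffTuple, cascade_succ, Function.update_self, cascade_update, Pi.smul_apply]
  simp only [cascade, smul_smul, ← sub_smul]
  ring_nf

lemma norm_cascade (hv : ∀ j, -1 ≤ v j) (n : ℕ) (x : ℕ → Fin m) :
    ‖cascade v a n x‖ = cascade v ‖a‖ n x := by
  have h : 0 ≤ ∏ i : Fin n, (1 + v (x i)) :=
    Finset.prod_nonneg fun i _ => by linarith [hv (x i)]
  rw [cascade, cascade, norm_smul, Real.norm_of_nonneg h, smul_eq_mul]

variable {μ : Measure (ℕ → Fin m)} {p : Measure (Fin m)} [IsProbabilityMeasure p]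

lemma integrable_cascade (hμ : ∀ n, μ.map (take n) = Measure.pi fun _ => p) (n : ℕ) :
    Integrable (cascade v a n) μ :=
  integrable_comp_take (hμ n) fun w => (∏ i, (1 + v (w i))) • a

lemma integral_cascade [CompleteSpace E] (hμ : ∀ n, μ.map (take n) = Measure.pi fun _ => p)
    (n : ℕ) : ∫ x, cascade v a n x ∂μ = (∫ j, (1 + v j) ∂p) ^ n • a :=
  calc ∫ x, cascade v a n x ∂μ = ∫ w, (∏ i, (1 + v (w i))) • a ∂(Measure.pi fun _ => p) :=
        integral_comp_take (hμ n) fun w => (∏ i, (1 + v (w i))) • a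
    _ = _ := by
        rw [integral_smul_const, integral_fintype_prod_eq_pow fun j => 1 + v j, Fintype.card_fin]

lemma eLpNorm_one_cascade (hμ : ∀ n, μ.map (take n) = Measure.pi fun _ => p)
    (hv : ∀ j, -1 ≤ v j) (n : ℕ) :
    eLpNorm (cascade v a n) 1 μ = ENNReal.ofReal ((∫ j, (1 + v j) ∂p) ^ n * ‖a‖) := by
  rw [eLpNorm_one_eq_lintegral_enorm,
    ← ofReal_integral_norm_eq_lintegral_enorm (integrable_cascade v a hμ n)]
  simp only [norm_cascade v a hv, integral_cascade v ‖a‖ hμ n, smul_eq_mul]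

end Cascade

lemma memW_cascade {m l : ℕ} {W : Submodule ℝ (Fin m → EuclideanSpace ℝ (Fin l))}
    (v : Fin m → ℝ) {a : EuclideanSpace ℝ (Fin l)} (h : (fun j => v j • a) ∈ W) :
    MemW m l W (cascade v a) := fun n x => by
  rw [diffTuple_cascade]
  exact W.smul_mem _ h

lemma integral_uniformOfFintype_one_add {m : ℕ} [NeZero m] {v : Fin m → ℝ}
    (hv : ∑ j, v j = 0) : ∫ j, (1 + v j) ∂(PMF.uniformOfFintype (Fin m)).toMeasure = 1 := by
  simp [PMF.integral_eq_sum, ← Finset.mul_sum, Finset.sum_add_distrib, hv]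

section RieszSums

variable {m : ℕ} {E : Type*} [NormedAddCommGroup E] [NormedSpace ℝ E]

lemma integral_rieszSum {μ : Measure (ℕ → Fin m)} {F : ℕ → (ℕ → Fin m) → E}
    (hF : ∀ n, Integrable (F n) μ) (α : ℝ) (N : ℕ) :
    ∫ x, rieszSum m α F N x ∂μ =
      ∑ n ∈ Finset.Icc 1 N, (m : ℝ) ^ (-(α * n)) • (∫ x, F n x ∂μ - ∫ x, F (n - 1) x ∂μ) := by
  refine (integral_finsetSum _ fun n _ => ((hF n).sub (hF (n - 1))).smul _).trans ?_
  refine Finset.sum_congr rfl fun n _ => ?_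
  rw [← integral_sub (hF _) (hF _), ← integral_smul]
  rfl

lemma rpow_neg_mul_mul_pow_sub_pow {b : ℝ} (hb : 0 < b) (α : ℝ) {n : ℕ} (hn : 1 ≤ n) :
    b ^ (-(α * n)) * ((b ^ α) ^ n - (b ^ α) ^ (n - 1)) = 1 - b ^ (-α) := by
  have hs : 0 < b ^ α := Real.rpow_pos_of_pos hb α
  obtain ⟨k, rfl⟩ := Nat.exists_eq_add_of_le' hn
  rw [Real.rpow_neg hb.le, Real.rpow_neg hb.le, Real.rpow_mul hb.le, Real.rpow_natCast,
    Nat.add_sub_cancel, pow_succ]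
  field_simp

variable [CompleteSpace E] {v : Fin m → ℝ} (a : E) {μ : Measure (ℕ → Fin m)}
  {p : Measure (Fin m)} [IsProbabilityMeasure p] {α : ℝ}

lemma integral_rieszSum_cascade (hm : 0 < m)
    (hμ : ∀ n, μ.map (take n) = Measure.pi fun _ => p) (hv : ∫ j, (1 + v j) ∂p = (m : ℝ) ^ α)
    (N : ℕ) : ∫ x, rieszSum m α (cascade v a) N x ∂μ = ((N : ℝ) * (1 - (m : ℝ) ^ (-α))) • a := by
  have hm' : (0 : ℝ) < m := Nat.cast_pos.2 hm
  simp only [integral_rieszSum (integrable_cascade v a hμ), integral_cascade v a hμ, hv,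
    ← sub_smul, smul_smul]
  rw [Finset.sum_congr rfl fun n hn =>
      by rw [rpow_neg_mul_mul_pow_sub_pow hm' α (Finset.mem_Icc.1 hn).1],
    Finset.sum_const, Nat.card_Icc, Nat.add_sub_cancel, ← Nat.cast_smul_eq_nsmul ℝ, smul_smul]

lemma iSup_one_le_eq_top_of_natCast_mul_le {f : ℕ → ℝ≥0∞} {δ : ℝ≥0∞} (hδ : δ ≠ 0)
    (h : ∀ N : ℕ, N * δ ≤ f N) : ⨆ (N : ℕ) (_ : 1 ≤ N), f N = ⊤ := by
  rw [eq_top_iff, ← ENNReal.top_mul hδ, ← ENNReal.iSup_natCast, ENNReal.iSup_mul]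
  refine iSup_le fun N => ?_
  rcases N.eq_zero_or_pos with rfl | hN
  · simp
  · exact le_iSup₂_of_le N hN (h N)

lemma iSup_lintegral_rieszSum_cascade_eq_top (hm : 1 < m) {a : E} (ha : a ≠ 0) (hα : 0 < α)
    (hμ : ∀ n, μ.map (take n) = Measure.pi fun _ => p) (hv : ∫ j, (1 + v j) ∂p = (m : ℝ) ^ α) :
    ⨆ (N : ℕ) (_ : 1 ≤ N), ∫⁻ x, ‖rieszSum m α (cascade v a) N x‖ₑ ∂μ = ⊤ := by
  have hm' : (1 : ℝ) < m := Nat.one_lt_cast.2 hm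
  have hδ : (1 - (m : ℝ) ^ (-α)) • a ≠ 0 :=
    smul_ne_zero (sub_ne_zero.2 (Real.rpow_lt_one_of_one_lt_of_neg hm' (by linarith)).ne') ha
  refine iSup_one_le_eq_top_of_natCast_mul_le (enorm_ne_zero.2 hδ) fun N => ?_
  calc (N : ℝ≥0∞) * ‖(1 - (m : ℝ) ^ (-α)) • a‖ₑ
      = ‖((N : ℝ) * (1 - (m : ℝ) ^ (-α))) • a‖ₑ := by
        rw [mul_smul, enorm_smul (N : ℝ), Real.enorm_natCast]
    _ = ‖∫ x, rieszSum m α (cascade v a) N x ∂μ‖ₑ := by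
        rw [integral_rieszSum_cascade a (by omega) hμ hv N]
    _ ≤ _ := enorm_integral_le_lintegral_enorm _

end RieszSums

section Kappa

variable {m l : ℕ} {W : Submodule ℝ (Fin m → EuclideanSpace ℝ (Fin l))} {v : Fin m → ℝ}

lemma sum_one_add_of_mem_kappaSet (hv : v ∈ kappaSet m l W) : ∑ j, (1 + v j) = m := by
  simp [Finset.sum_add_distrib, hv.1]

lemma one_add_le_of_mem_kappaSet (hv : v ∈ kappaSet m l W) (j : Fin m) : 1 + v j ≤ m := by
  rw [← sum_one_add_of_mem_kappaSet hv]
  exact Finset.single_le_sum (f := fun i => 1 + v i) (fun i _ => by linarith [hv.2.1 i])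
    (Finset.mem_univ j)

lemma isCompact_kappaSet : IsCompact (kappaSet m l W) := by
  set C : Set ((Fin m → ℝ) × EuclideanSpace ℝ (Fin l)) :=
    {q | (∑ j, q.1 j = 0) ∧ (∀ j, -1 ≤ q.1 j) ∧ ‖q.2‖ = 1 ∧ (fun j => q.1 j • q.2) ∈ W}
  -- normalising `a` in the definition of `kappaSet` exhibits it as a projection of `C`
  have hproj : kappaSet m l W = Prod.fst '' C := by
    ext v
    constructor
    · rintro ⟨hsum, hge, a, ha, haW⟩
      refine ⟨(v, ‖a‖⁻¹ • a), ⟨hsum, hge, norm_smul_inv_norm ha, ?_⟩, rfl⟩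
      convert W.smul_mem ‖a‖⁻¹ haW using 1
      funext j
      exact smul_comm _ _ _
    · rintro ⟨⟨v, a⟩, ⟨hsum, hge, ha, haW⟩, rfl⟩
      exact ⟨hsum, hge, a, by rintro rfl; simp at ha, haW⟩
  have hclosed : IsClosed C := by
    refine (isClosed_eq (by fun_prop) continuous_const).and
      ((?_ : IsClosed {q : (Fin m → ℝ) × EuclideanSpace ℝ (Fin l) | ∀ j, -1 ≤ q.1 j}).and
      ((isClosed_eq (by fun_prop) continuous_const).and
      (W.closed_of_finiteDimensional.preimage (by fun_prop))))
    rw [Set.ofPred_forall]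
    exact isClosed_iInter fun j => isClosed_le continuous_const (by fun_prop)
  have hsub : C ⊆ Set.Icc (-1) (fun _ => (m : ℝ) - 1) ×ˢ Metric.sphere 0 1 := by
    rintro ⟨v, a⟩ hq
    refine ⟨⟨hq.2.1, fun j => ?_⟩, by simpa using hq.2.2.1⟩
    have := one_add_le_of_mem_kappaSet (W := W) (v := v) (hproj ▸ ⟨_, hq, rfl⟩) j
    simp only
    linarith
  rw [hproj]
  exact ((isCompact_Icc.prod (isCompact_sphere 0 1)).of_isClosed_subset hclosed hsub).image
    continuous_fst

lemma kappaSet_nonempty (h : 0 < kappa m l W 0) : (kappaSet m l W).Nonempty := by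
  by_contra hK
  rw [Set.not_nonempty_iff_eq_empty] at hK
  simp [kappa, hK] at h

lemma log_iSup_le_kappa_zero (hm : 0 < m) (hv : v ∈ kappaSet m l W) :
    Real.log (⨆ j, (1 + v j)) ≤ kappa m l W 0 := by
  rw [kappa, if_pos rfl]
  refine le_csSup ⟨m, ?_⟩ ⟨v, hv, rfl⟩
  rintro _ ⟨u, hu, rfl⟩
  have : Nonempty (Fin m) := ⟨⟨0, hm⟩⟩
  have h0 : 0 ≤ ⨆ j, (1 + u j) :=
    le_ciSup_of_le (Set.finite_range _).bddAbove ⟨0, hm⟩ (by linarith [hu.2.1 ⟨0, hm⟩])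
  exact (Real.log_le_self h0).trans (ciSup_le (one_add_le_of_mem_kappaSet hu))

lemma one_add_le_exp_kappa_zero (hm : 0 < m) (hv : v ∈ kappaSet m l W) (j : Fin m) :
    1 + v j ≤ Real.exp (kappa m l W 0) := by
  rcases le_or_gt (1 + v j) 0 with h | h
  · exact h.trans (Real.exp_pos _).le
  have hj : 1 + v j ≤ ⨆ i, (1 + v i) :=
    le_ciSup (f := fun i => 1 + v i) (Set.finite_range _).bddAbove j
  calc 1 + v j ≤ ⨆ i, (1 + v i) := hj
    _ = Real.exp (Real.log (⨆ i, (1 + v i))) := (Real.exp_log (h.trans_le hj)).symm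
    _ ≤ _ := Real.exp_le_exp.2 (log_iSup_le_kappa_zero hm hv)

lemma sum_sq_one_add_pos (hm : 0 < m) (hv : v ∈ kappaSet m l W) :
    0 < ∑ j, (1 + v j) ^ 2 := by
  obtain ⟨j, hj⟩ : ∃ j, 1 + v j ≠ 0 := by
    by_contra! h
    have := sum_one_add_of_mem_kappaSet hv
    simp only [h, Finset.sum_const_zero] at this
    exact hm.ne (by exact_mod_cast this)
  exact Finset.sum_pos' (fun j _ => sq_nonneg _) ⟨j, Finset.mem_univ j, by positivity⟩

lemma kappa_half_eq (hm : 0 < m) (hv : v ∈ kappaSet m l W)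
    (hmax : IsMaxOn (fun u : Fin m → ℝ => ∑ j, (1 + u j) ^ 2) (kappaSet m l W) v) :
    kappa m l W (1 / 2) = 1 / 2 * Real.log (1 / m * ∑ j, (1 + v j) ^ 2) := by
  have hsq (u : Fin m → ℝ) : ∑ j, |1 + u j| ^ (1 / (1 / 2 : ℝ)) = ∑ j, (1 + u j) ^ 2 := by
    norm_num [sq_abs]
  rw [kappa, if_neg (by norm_num)]
  simp only [hsq]
  refine IsGreatest.csSup_eq ⟨⟨v, hv, rfl⟩, ?_⟩
  rintro _ ⟨u, hu, rfl⟩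
  have hpos := sum_sq_one_add_pos hm hu
  have hle : ∑ j, (1 + u j) ^ 2 ≤ ∑ j, (1 + v j) ^ 2 := hmax hu
  have hm' : (0 : ℝ) < m := Nat.cast_pos.2 hm
  exact mul_le_mul_of_nonneg_left (Real.log_le_log (by positivity) (by gcongr)) (by norm_num)

lemma exists_sum_sq_eq_of_kappa_half (hm : 0 < m) (hK : (kappaSet m l W).Nonempty)
    (h : kappa m l W (1 / 2) = (1 - 1 / 2) * kappa m l W 0) :
    ∃ v ∈ kappaSet m l W, ∑ j, (1 + v j) ^ 2 = m * Real.exp (kappa m l W 0) := by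
  obtain ⟨v, hv, hmax⟩ := isCompact_kappaSet.exists_isMaxOn hK
    (by fun_prop : Continuous fun u : Fin m → ℝ => ∑ j, (1 + u j) ^ 2).continuousOn
  refine ⟨v, hv, ?_⟩
  rw [kappa_half_eq hm hv hmax] at h
  have hlog : Real.log (1 / m * ∑ j, (1 + v j) ^ 2) = kappa m l W 0 := by linarith
  have hm' : (0 : ℝ) < m := Nat.cast_pos.2 hm
  rw [← hlog, Real.exp_log (by have := sum_sq_one_add_pos hm hv; positivity)]
  field_simp

end Kappa

/-- An affine reweighting `q_j ∝ 1 + t (c_j - 1)` of the uniform law tilts the mean of `c`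
from `1` to `s`; the constraint `∑ c_j² = m M` is what makes `t = (s - 1)/(M - 1)` work. -/
lemma exists_measure_integral_eq {m : ℕ} (hm : 0 < m) {c : Fin m → ℝ} {M s : ℝ}
    (hc0 : ∀ j, 0 ≤ c j) (hcM : ∀ j, c j ≤ M) (hsum : ∑ j, c j = m)
    (hsq : ∑ j, c j ^ 2 = m * M) (hs : 1 < s) (hsM : s ≤ M) :
    ∃ p : Measure (Fin m), IsProbabilityMeasure p ∧ (∀ j, p {j} ≤ ENNReal.ofReal (s / m)) ∧
      ∫ j, c j ∂p = s := by
  have hm' : (0 : ℝ) < m := Nat.cast_pos.2 hm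
  have hM : 0 < M - 1 := by linarith
  set t := (s - 1) / (M - 1)
  have ht0 : 0 ≤ t := div_nonneg (by linarith) hM.le
  have ht1 : t ≤ 1 := (div_le_one hM).2 (by linarith)
  have htM : t * (M - 1) = s - 1 := div_mul_cancel₀ _ hM.ne'
  set q : Fin m → ℝ := fun j => (1 + t * (c j - 1)) / m
  have hq0 (j : Fin m) : 0 ≤ q j := div_nonneg (by nlinarith [hc0 j]) hm'.le
  have hq1 : ∑ j, q j = 1 := by
    simp only [q, ← Finset.sum_div, Finset.sum_add_distrib, ← Finset.mul_sum,
      Finset.sum_sub_distrib, hsum]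
    simp [hm'.ne']
  have hqc : ∑ j, q j * c j = s := by
    have : ∑ j, (1 + t * (c j - 1)) * c j = m * s := by
      simp only [add_mul, one_mul, mul_assoc, sub_mul, Finset.sum_add_distrib, ← Finset.mul_sum,
        Finset.sum_sub_distrib, ← sq, hsum, hsq]
      linear_combination (m : ℝ) * htM
    simp only [q, div_mul_eq_mul_div, ← Finset.sum_div, this]
    field_simp
  let p := PMF.ofFintype (fun j => ENNReal.ofReal (q j)) (by
    rw [← ENNReal.ofReal_sum_of_nonneg fun j _ => hq0 j, hq1, ENNReal.ofReal_one])
  refine ⟨p.toMeasure, inferInstance, fun j => ?_, ?_⟩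
  · rw [p.toMeasure_apply_singleton j (measurableSet_singleton j), PMF.ofFintype_apply]
    exact ENNReal.ofReal_le_ofReal (div_le_div_of_nonneg_right (by nlinarith [hcM j]) hm'.le)
  · simp only [PMF.integral_eq_sum, p, PMF.ofFintype_apply, ENNReal.toReal_ofReal (hq0 _),
      smul_eq_mul, hqc]

end MartingaleModel

theorem trace_theorem_sharpness_general (m l : ℕ) (hm : 3 ≤ m)
    (P : Measure (ℕ → Fin m))
    (hPcyl : ∀ (n : ℕ) (w : Fin n → Fin m), P (cyl m n w) = ((m : ℝ≥0∞))⁻¹ ^ n)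
    (W : Submodule ℝ (Fin m → EuclideanSpace ℝ (Fin l)))
    (hlin : ∀ θ ∈ Set.Icc (0 : ℝ) 1, kappa m l W θ = (1 - θ) * kappa m l W 0)
    (α : ℝ) (hα0 : 0 < α) (hα : α ≤ kappa m l W 0 / Real.log m) :
    ∃ (ν : Measure (ℕ → Fin m)) (_ : IsFiniteMeasure ν) (Cν : ℝ≥0),
      (∀ (n : ℕ) (w : Fin n → Fin m),
        ν (cyl m n w) ≤ (Cν : ℝ≥0∞) * ENNReal.ofReal ((m : ℝ) ^ ((α - 1) * n))) ∧
      ∃ F : ℕ → (ℕ → Fin m) → EuclideanSpace ℝ (Fin l),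
        IsMartingaleFun m F ∧ (⨆ n, eLpNorm (F n) 1 P) < ⊤ ∧ MemW m l W F ∧
        (⨆ (N : ℕ) (_ : 1 ≤ N),
          ∫⁻ x, (‖rieszSum m α F N x‖₊ : ℝ≥0∞) ∂ν) = ⊤ := by
  have hm1 : (1 : ℝ) < m := by exact_mod_cast (by omega : 1 < m)
  have hmα : 1 < (m : ℝ) ^ α := Real.one_lt_rpow hm1 hα0
  have hmαM : (m : ℝ) ^ α ≤ Real.exp (kappa m l W 0) := by
    rw [Real.rpow_def_of_pos (by linarith), Real.exp_le_exp, mul_comm]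
    exact (le_div_iff₀ (Real.log_pos hm1)).1 hα
  obtain ⟨v, hv, hsq⟩ := exists_sum_sq_eq_of_kappa_half (by omega)
    (kappaSet_nonempty (Real.one_lt_exp_iff.1 (hmα.trans_le hmαM)))
    (hlin (1 / 2) ⟨by norm_num, by norm_num⟩)
  obtain ⟨a, ha, haW⟩ := hv.2.2
  obtain ⟨p, _, hp, hpv⟩ := exists_measure_integral_eq (by omega) (c := fun j => 1 + v j)
    (fun j => by linarith [hv.2.1 j]) (one_add_le_exp_kappa_zero (by omega) hv)
    (sum_one_add_of_mem_kappaSet hv) hsq hmα hmαM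
  have : NeZero m := ⟨by omega⟩
  have hP := map_take_eq_pi_of_cyl (μ := P) (p := (PMF.uniformOfFintype (Fin m)).toMeasure)
    fun n w => by simp [hPcyl]
  refine ⟨Measure.infinitePi fun _ => p, inferInstance, 1, fun n w => ?_, cascade v a,
    isMartingaleFun_cascade v a hv.1, ?_, memW_cascade v haW,
    iSup_lintegral_rieszSum_cascade_eq_top (by omega) ha hα0 (map_take_infinitePi p) hpv⟩
  · rw [ENNReal.coe_one, one_mul, Real.rpow_mul (by positivity), Real.rpow_natCast,
      Real.rpow_sub_one (by positivity)]
    exact infinitePi_cyl_le (by positivity) hp n w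
  · simp only [eLpNorm_one_cascade v a hP hv.2.1, integral_uniformOfFintype_one_add hv.1,
      one_pow, one_mul, iSup_const]
    exact ENNReal.ofReal_lt_top

/-- **Sharpness of the trace theorem when `κ` is linear.** Suppose
`κ(θ) = (1-θ)·κ(0)` on `[0,1]`. Then for every `α` with `0 < α ≤ κ(0)/log m` there
exist a finite positive Borel measure `ν` on `𝕋` satisfying the `(α,1)`-Frostman
condition with some constant `C_ν`, and a martingale `F ∈ 𝔚` with `‖F‖_{L_1} < ∞`,
such that `sup_{N ≥ 1} ∫ ‖∑_{n=1}^N m^{-αn} f_n‖ dν = ∞`; in particular `I_α` does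
not map `𝔚` boundedly into `L_1(ν)`. -/
theorem trace_theorem_sharpness (m l : ℕ) (hm : 3 ≤ m) (hl : 1 ≤ l)
    (P : Measure (ℕ → Fin m)) (hP : IsProbabilityMeasure P)
    (hPcyl : ∀ (n : ℕ) (w : Fin n → Fin m), P (cyl m n w) = ((m : ℝ≥0∞))⁻¹ ^ n)
    (W : Submodule ℝ (Fin m → EuclideanSpace ℝ (Fin l)))
    (hWV : ∀ b ∈ W, ∑ j : Fin m, b j = 0)
    (hlin : ∀ θ ∈ Set.Icc (0 : ℝ) 1, kappa m l W θ = (1 - θ) * kappa m l W 0)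
    (α : ℝ) (hα0 : 0 < α) (hα : α ≤ kappa m l W 0 / Real.log m) :
    ∃ (ν : Measure (ℕ → Fin m)) (_ : IsFiniteMeasure ν) (Cν : ℝ≥0),
      (∀ (n : ℕ) (w : Fin n → Fin m),
        ν (cyl m n w) ≤ (Cν : ℝ≥0∞) * ENNReal.ofReal ((m : ℝ) ^ ((α - 1) * n))) ∧
      ∃ F : ℕ → (ℕ → Fin m) → EuclideanSpace ℝ (Fin l),
        IsMartingaleFun m F ∧ (⨆ n, eLpNorm (F n) 1 P) < ⊤ ∧ MemW m l W F ∧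
        (⨆ (N : ℕ) (_ : 1 ≤ N),
          ∫⁻ x, (‖rieszSum m α F N x‖₊ : ℝ≥0∞) ∂ν) = ⊤ :=
  trace_theorem_sharpness_general m l hm P hPcyl W hlin α hα0 hα
end
end
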